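/- Let a, b, c ∈ ℝ³ be affinely independent, let P be the closed triangle (the convex hull of {a, b, c}), and let p = α·a + β·b + γ·c with α, β, γ > 0 and α + β + γ = 1 be a point in the interior of the triangle. For every y ∈ ℝ³, p is a nearest point of y in P if and only if ⟨y − p, b − a⟩ = 0 and ⟨y − p, c − a⟩ = 0, i.e., y − p is orthogonal to the plane of the triangle. -/

import Mathlib

open scoped RealInnerProductSpace

/-!
By the variational characterisation of projections onto convex sets, `p ∈ P` is a nearest
point of `y` iff `⟪y - p, w - p⟫ ≤ 0` for all `w ∈ P`. The affine function
`w ↦ ⟪y - p, w - p⟫` vanishes at `p`, a combination of the vertices with positive weights,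
so if it is nonpositive at every vertex it vanishes at every vertex; conversely, if it
vanishes at the vertices it vanishes on their convex hull.
-/

open Finset

variable {E : Type*} [NormedAddCommGroup E] [InnerProductSpace ℝ E]

theorem norm_sub_eq_infDist_iff_real_inner_le_zero {K : Set E} (hK : Convex ℝ K) {p : E}
    (hp : p ∈ K) (y : E) :
    ‖y - p‖ = Metric.infDist y K ↔ ∀ w ∈ K, ⟪y - p, w - p⟫ ≤ 0 := by
  rw [Metric.infDist_eq_iInf]
  simp only [dist_eq_norm]
  exact norm_eq_iInf_iff_real_inner_le_zero hK hp

theorem real_inner_eq_of_mem_convexHull {s : Set E} {u : E} {r : ℝ} (h : ∀ x ∈ s, ⟪u, x⟫ = r)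
    {w : E} (hw : w ∈ convexHull ℝ s) : ⟪u, w⟫ = r :=
  convexHull_min h (convex_hyperplane (innerₗ E u).isLinear r) hw

section PositiveCombination

variable {ι : Type*} [Fintype ι] {v : ι → E} {w : ι → ℝ} {p : E}

theorem sum_smul_real_inner_sub_eq_zero (hw1 : ∑ i, w i = 1) (hp : ∑ i, w i • v i = p) (u : E) :
    ∑ i, w i * ⟪u, v i - p⟫ = 0 := by
  simp_rw [← real_inner_smul_right, ← inner_sum, smul_sub, sum_sub_distrib, ← sum_smul, hw1,
    one_smul, hp, sub_self, inner_zero_right]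

theorem real_inner_sub_eq_zero_of_forall_le_zero (hw : ∀ i, 0 < w i) (hw1 : ∑ i, w i = 1)
    (hp : ∑ i, w i • v i = p) {u : E} (h : ∀ i, ⟪u, v i - p⟫ ≤ 0) (i : ι) :
    ⟪u, v i - p⟫ = 0 := by
  have hterms := (sum_eq_zero_iff_of_nonpos fun j _ ↦
    mul_nonpos_of_nonneg_of_nonpos (hw j).le (h j)).1 (sum_smul_real_inner_sub_eq_zero hw1 hp u)
  exact (mul_eq_zero.1 (hterms i (mem_univ i))).resolve_left (hw i).ne'

theorem sum_smul_mem_convexHull_range (hw : ∀ i, 0 ≤ w i) (hw1 : ∑ i, w i = 1) :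
    ∑ i, w i • v i ∈ convexHull ℝ (Set.range v) :=
  (convex_convexHull ℝ _).sum_mem (fun i _ ↦ hw i) hw1
    fun i _ ↦ subset_convexHull ℝ _ (Set.mem_range_self i)

theorem norm_sub_eq_infDist_convexHull_range_iff (hw : ∀ i, 0 < w i) (hw1 : ∑ i, w i = 1)
    (hp : ∑ i, w i • v i = p) (y : E) :
    ‖y - p‖ = Metric.infDist y (convexHull ℝ (Set.range v)) ↔ ∀ i, ⟪y - p, v i - p⟫ = 0 := by
  have hpK : p ∈ convexHull ℝ (Set.range v) :=
    hp ▸ sum_smul_mem_convexHull_range (fun i ↦ (hw i).le) hw1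
  rw [norm_sub_eq_infDist_iff_real_inner_le_zero (convex_convexHull ℝ _) hpK]
  constructor
  · exact fun h ↦ real_inner_sub_eq_zero_of_forall_le_zero hw hw1 hp fun i ↦
      h _ (subset_convexHull ℝ _ (Set.mem_range_self i))
  · intro h x hx
    have hconst : ∀ z ∈ Set.range v, ⟪y - p, z⟫ = ⟪y - p, p⟫ := by
      rintro _ ⟨i, rfl⟩
      rw [← sub_eq_zero, ← inner_sub_right, h i]
    rw [inner_sub_right, real_inner_eq_of_mem_convexHull hconst hx, sub_self]

end PositiveCombination

theorem triangle_interior_nearest_point_iff_orthogonal_general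
    (a b c : EuclideanSpace ℝ (Fin 3))
    (α β γ : ℝ) (hα : 0 < α) (hβ : 0 < β) (hγ : 0 < γ) (hsum : α + β + γ = 1)
    (p : EuclideanSpace ℝ (Fin 3)) (hp : p = α • a + β • b + γ • c) :
    ∀ y : EuclideanSpace ℝ (Fin 3),
      (‖y - p‖ = Metric.infDist y (convexHull ℝ {a, b, c}) ↔
        (⟪y - p, b - a⟫ = 0 ∧ ⟪y - p, c - a⟫ = 0)) := by
  intro y
  have hw : ∀ i, 0 < ![α, β, γ] i := by
    intro i; fin_cases i <;> assumption
  have hnearest := norm_sub_eq_infDist_convexHull_range_iff (v := ![a, b, c]) (p := p) hw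
    (by simpa [Fin.sum_univ_three]) (by simp [Fin.sum_univ_three, hp]) y
  rw [Matrix.range_cons, Matrix.range_cons_cons_empty, Set.singleton_union] at hnearest
  rw [hnearest, Fin.forall_fin_succ, Fin.forall_fin_succ, Fin.forall_fin_succ]
  have hp_inner : ⟪y - p, p⟫ = α * ⟪y - p, a⟫ + β * ⟪y - p, b⟫ + γ * ⟪y - p, c⟫ := by
    simp only [hp, inner_add_right, real_inner_smul_right]
  simp only [Matrix.cons_val_zero, Matrix.cons_val_succ, IsEmpty.forall_iff, and_true,
    inner_sub_right, sub_eq_zero]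
  constructor
  · rintro ⟨ha, hb, hc⟩
    exact ⟨hb.trans ha.symm, hc.trans ha.symm⟩
  · rintro ⟨hb, hc⟩
    have ha : ⟪y - p, a⟫ = ⟪y - p, p⟫ := by
      linear_combination -hp_inner - β * hb - γ * hc - ⟪y - p, a⟫ * hsum
    exact ⟨ha, hb.trans ha, hc.trans ha⟩

/-- For a point `p = αa + βb + γc` (with `α, β, γ > 0`, `α + β + γ = 1`) in the interior
of the closed triangle `P = conv{a,b,c} ⊆ ℝ³` with `a, b, c` affinely independent:
`p` is a nearest point of `y` in `P` iff `y − p` is orthogonal to the plane of the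
triangle, i.e. `⟪y − p, b − a⟫ = 0` and `⟪y − p, c − a⟫ = 0`. -/
theorem triangle_interior_nearest_point_iff_orthogonal
    (a b c : EuclideanSpace ℝ (Fin 3)) (hind : AffineIndependent ℝ ![a, b, c])
    (α β γ : ℝ) (hα : 0 < α) (hβ : 0 < β) (hγ : 0 < γ) (hsum : α + β + γ = 1)
    (p : EuclideanSpace ℝ (Fin 3)) (hp : p = α • a + β • b + γ • c) :
    ∀ y : EuclideanSpace ℝ (Fin 3),
      (‖y - p‖ = Metric.infDist y (convexHull ℝ {a, b, c}) ↔
        (⟪y - p, b - a⟫ = 0 ∧ ⟪y - p, c - a⟫ = 0)) :=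
  triangle_interior_nearest_point_iff_orthogonal_general a b c α β γ hα hβ hγ hsum p hp
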